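/- Let Γ be an infinite finitely generated group and μ a finitely supported symmetric admissible probability measure on Γ whose random walk is transient at the spectral radius. Let A ⊆ Γ be any subset and let 1 < r ≤ R. If ω_A(r) := limsup_{n→∞} (1/n) log Σ_{x ∈ A, |x| = n} G(e,x|r) is strictly less than ω_Γ(r), then δ(A, 𝔡_r) < 1, where δ(A, 𝔡_r) = limsup_{n→∞} (1/n) log #{x ∈ A : 𝔡_r(e,x) ≤ n}. In fact there exists ε > 0 such that Σ_{x∈A} e^{−(1−ε) 𝔡_r(e,x)} < ∞. -/

import Mathlib

open scoped Pointwise Classical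
open Filter

namespace GreenGrowth

variable {G : Type*} [Group G]

/-- Word length with respect to a finite generating set `S` (symmetrized). -/
noncomputable def wordLength (S : Finset G) (x : G) : ℕ :=
  sInf {n : ℕ | x ∈ ((S : Set G) ∪ (S : Set G)⁻¹) ^ n}

/-- `n`-step distribution of the `μ`-random walk: the `n`-fold convolution power of `μ`,
so that `p_n(x, y) = convPow μ n (x⁻¹ * y)`. -/
noncomputable def convPow (μ : G → ℝ) : ℕ → G → ℝ
  | 0 => fun x => if x = 1 then 1 else 0
  | n + 1 => fun x => ∑' y : G, μ y * convPow μ n (y⁻¹ * x)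

/-- The Green function `G(e, x | r)`. -/
noncomputable def green (μ : G → ℝ) (r : ℝ) (x : G) : ℝ :=
  ∑' n : ℕ, r ^ n * convPow μ n x

/-- `μ` is a probability measure on `G`. -/
def IsProbMeasure (μ : G → ℝ) : Prop := (∀ x, 0 ≤ μ x) ∧ HasSum μ 1

/-- `μ` is admissible: its support generates `G` as a semigroup, i.e. every element of `G`
is reached with positive probability at some time. -/
def IsAdmissible (μ : G → ℝ) : Prop := ∀ x : G, ∃ n : ℕ, 0 < convPow μ n x

/-- `μ` is symmetric. -/
def IsSymm (μ : G → ℝ) : Prop := ∀ x : G, μ x⁻¹ = μ x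

/-- The spectral radius of the `μ`-random walk. -/
noncomputable def spectralRadius (μ : G → ℝ) : ℝ :=
  limsup (fun n : ℕ => (convPow μ n 1) ^ ((n : ℝ)⁻¹)) atTop

/-- `R`, the radius of convergence of the Green function: the inverse of the
spectral radius. -/
noncomputable def greenRadius (μ : G → ℝ) : ℝ := (spectralRadius μ)⁻¹

/-- The `μ`-random walk is transient at the spectral radius: the Green function
`G(x, y | r)` is finite for all `x, y` and all `0 < r ≤ R`. -/
def TransientAtSpectralRadius (μ : G → ℝ) : Prop :=
  ∀ r : ℝ, 0 < r → r ≤ greenRadius μ →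
    ∀ x : G, Summable (fun n : ℕ => r ^ n * convPow μ n x)

/-- `H_r(n) = Σ_{x ∈ S_n} G(e, x | r)`, the sum of the Green function over the sphere
of radius `n`. -/
noncomputable def greenSphereSum (S : Finset G) (μ : G → ℝ) (r : ℝ) (n : ℕ) : ℝ :=
  ∑' x : G, if wordLength S x = n then green μ r x else 0

/-- `ω_Γ(r) = limsup (1/n) log H_r(n)`, the growth rate of the Green function. -/
noncomputable def greenGrowthRate (S : Finset G) (μ : G → ℝ) (r : ℝ) : ℝ :=
  limsup (fun n : ℕ => Real.log (greenSphereSum S μ r n) / n) atTop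

/-- The cardinality of the sphere of radius `n`. -/
noncomputable def sphereCard (S : Finset G) (n : ℕ) : ℕ :=
  Nat.card {x : G // wordLength S x = n}

/-- The volume growth rate `v = limsup (1/n) log #S_n`. -/
noncomputable def volumeGrowthRate (S : Finset G) : ℝ :=
  limsup (fun n : ℕ => Real.log (sphereCard S n) / n) atTop

end GreenGrowth

namespace GreenGrowth

variable {G : Type*} [Group G]

/-- The `r`-Green metric `|g|_r = −log(G(e,g|r)/G(e,e|r))`. -/
noncomputable def greenNorm (μ : G → ℝ) (r : ℝ) (g : G) : ℝ :=
  -Real.log (green μ r g / green μ r 1)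

/-- The distance `𝔡_r(x,y) = ω_Γ(r)|x⁻¹y| + |x⁻¹y|_r`. -/
noncomputable def drDist (S : Finset G) (μ : G → ℝ) (r : ℝ) (x y : G) : ℝ :=
  greenGrowthRate S μ r * (wordLength S (x⁻¹ * y) : ℝ) + greenNorm μ r (x⁻¹ * y)

end GreenGrowth

namespace GreenGrowth

/-- `ω_A(r) = limsup (1/n) log Σ_{x ∈ A, |x|=n} G(e,x|r)`. -/
noncomputable def omegaRestricted {G : Type*} [Group G] (S : Finset G) (μ : G → ℝ)
    (A : Set G) (r : ℝ) : ℝ :=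
  limsup (fun n : ℕ =>
    Real.log (∑' x : G, if x ∈ A ∧ wordLength S x = n then green μ r x else 0) / n)
    atTop

/-- The growth rate `δ(A, 𝔡) = limsup (1/n) log #{x ∈ A : 𝔡(e,x) ≤ n}` of a subset
`A` for a left-invariant distance given by the gauge `dfun x = 𝔡(e, x)`. -/
noncomputable def subsetGrowthRate {G : Type*} [Group G] (A : Set G) (dfun : G → ℝ) :
    ℝ :=
  limsup (fun n : ℕ => Real.log (Nat.card {x : G // x ∈ A ∧ dfun x ≤ (n : ℝ)}) / n)
    atTop



end GreenGrowth


namespace GreenGrowth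
variable {G : Type*} [Group G]

section Core
variable {μ : G → ℝ}

lemma convPow_nonneg (hpos : ∀ x, 0 ≤ μ x) : ∀ (n : ℕ) (x : G), 0 ≤ convPow μ n x := by
  intro n
  induction n with
  | zero => intro x; simp only [convPow]; positivity
  | succ n ih =>
    intro x
    simp only [convPow]
    exact tsum_nonneg fun y => mul_nonneg (hpos y) (ih _)

lemma convPow_succ_eq_sum (hfin : (Function.support μ).Finite) (n : ℕ) (x : G) :
    convPow μ (n + 1) x = ∑ y ∈ hfin.toFinset, μ y * convPow μ n (y⁻¹ * x) := by
  simp only [convPow]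
  exact tsum_eq_sum fun b hb => by
    rw [Set.Finite.mem_toFinset] at hb
    simp [Function.notMem_support.mp hb]

lemma convPow_support (hfin : (Function.support μ).Finite) :
    ∀ (n : ℕ) (x : G), x ∉ hfin.toFinset ^ n → convPow μ n x = 0 := by
  intro n
  induction n with
  | zero =>
    intro x hx
    simp only [pow_zero, Finset.mem_one] at hx
    simp [convPow, hx]
  | succ n ih =>
    intro x hx
    rw [convPow_succ_eq_sum hfin]
    refine Finset.sum_eq_zero fun y hy => ?_
    by_cases h : y⁻¹ * x ∈ hfin.toFinset ^ n
    · exfalso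
      apply hx
      have hx' : x = y * (y⁻¹ * x) := by group
      rw [pow_succ', hx']
      exact Finset.mul_mem_mul hy h
    · rw [ih _ h, mul_zero]

lemma convPow_summable_aux (hfin : (Function.support μ).Finite) (n : ℕ) (g : G → ℝ) :
    Summable (fun y : G => convPow μ n y * g y) :=
  summable_of_ne_finset_zero (s := hfin.toFinset ^ n)
    fun b hb => by rw [convPow_support hfin n b hb, zero_mul]

lemma convPow_add (hfin : (Function.support μ).Finite) (m n : ℕ) (x : G) :
    convPow μ (m + n) x = ∑' y : G, convPow μ m y * convPow μ n (y⁻¹ * x) := by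
  induction m generalizing x with
  | zero =>
    rw [zero_add, tsum_eq_single (1 : G)]
    · simp [convPow]
    · intro b hb; simp [convPow, hb]
  | succ m ih =>
    have h1 : m + 1 + n = (m + n) + 1 := by omega
    rw [h1, convPow_succ_eq_sum hfin]
    have step1 : ∀ z : G, convPow μ (m + n) (z⁻¹ * x)
        = ∑ y ∈ hfin.toFinset ^ m, convPow μ m y * convPow μ n (y⁻¹ * (z⁻¹ * x)) := by
      intro z
      rw [ih]
      exact tsum_eq_sum fun b hb => by rw [convPow_support hfin m b hb, zero_mul]
    simp_rw [step1]
    have step2 : ∀ z ∈ hfin.toFinset,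
        (∑ y ∈ hfin.toFinset ^ m, convPow μ m y * convPow μ n (y⁻¹ * (z⁻¹ * x)))
        = ∑ w ∈ hfin.toFinset ^ (m + 1), convPow μ m (z⁻¹ * w) * convPow μ n (w⁻¹ * x) := by
      intro z hz
      have hmap : (hfin.toFinset ^ m).map (Equiv.toEmbedding (Equiv.mulLeft z))
          ⊆ hfin.toFinset ^ (m + 1) := by
        intro w hw
        rw [Finset.mem_map] at hw
        obtain ⟨y, hy, rfl⟩ := hw
        rw [pow_succ']
        exact Finset.mul_mem_mul hz hy
      rw [show (∑ y ∈ hfin.toFinset ^ m, convPow μ m y * convPow μ n (y⁻¹ * (z⁻¹ * x)))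
          = ∑ w ∈ (hfin.toFinset ^ m).map (Equiv.toEmbedding (Equiv.mulLeft z)),
              convPow μ m (z⁻¹ * w) * convPow μ n (w⁻¹ * x) by
        rw [Finset.sum_map]
        refine Finset.sum_congr rfl fun y hy => ?_
        simp only [Equiv.coe_toEmbedding, Equiv.coe_mulLeft]
        rw [inv_mul_cancel_left, mul_inv_rev, mul_assoc]]
      refine Finset.sum_subset hmap fun w hw hw' => ?_
      have : z⁻¹ * w ∉ hfin.toFinset ^ m := by
        intro h
        exact hw' (Finset.mem_map.mpr ⟨z⁻¹ * w, h, by simp⟩)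
      rw [convPow_support hfin m _ this, zero_mul]
    rw [Finset.sum_congr rfl fun z hz => by rw [step2 z hz]]
    simp_rw [Finset.mul_sum]
    rw [Finset.sum_comm]
    have step3 : ∀ w : G, (∑ z ∈ hfin.toFinset, μ z * (convPow μ m (z⁻¹ * w) * convPow μ n (w⁻¹ * x)))
        = convPow μ (m + 1) w * convPow μ n (w⁻¹ * x) := by
      intro w
      rw [convPow_succ_eq_sum hfin, Finset.sum_mul]
      exact Finset.sum_congr rfl fun z _ => by ring
    rw [Finset.sum_congr rfl fun w _ => step3 w]
    exact (tsum_eq_sum fun b hb => by rw [convPow_support hfin (m+1) b hb, zero_mul]).symm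

lemma convPow_one_eq (x : G) : convPow μ 1 x = μ x := by
  show (∑' y : G, μ y * convPow μ 0 (y⁻¹ * x)) = μ x
  rw [tsum_eq_single x]
  · simp [convPow]
  · intro b hb
    simp [convPow, inv_mul_eq_one, hb]

end Core

section Core2
variable {μ : G → ℝ}
local notation "cp" => convPow μ

lemma convPow_inv (hfin : (Function.support μ).Finite) (hsymm : ∀ x : G, μ x⁻¹ = μ x) :
    ∀ (n : ℕ) (x : G), cp n x⁻¹ = cp n x := by
  intro n
  induction n with
  | zero => intro x; simp [convPow, inv_eq_one]
  | succ n ih =>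
    intro x
    have lhs : cp (n+1) x⁻¹ = ∑' y : G, μ y * cp n (y⁻¹ * x⁻¹) := rfl
    have e1 : ∀ y : G, cp n (y⁻¹ * x⁻¹) = cp n (x * y) := by
      intro y
      rw [show y⁻¹ * x⁻¹ = (x * y)⁻¹ by group, ih]
    rw [lhs]
    simp_rw [e1]
    have reindex : (∑' y : G, μ y * cp n (x * y)) = ∑' w : G, μ (x⁻¹ * w) * cp n w := by
      rw [← Equiv.tsum_eq (Equiv.mulLeft x) (fun w => μ (x⁻¹ * w) * cp n w)]
      simp [Equiv.coe_mulLeft]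
    rw [reindex]
    rw [show (n + 1 : ℕ) = n + 1 from rfl, convPow_add hfin n 1 x]
    refine tsum_congr fun w => ?_
    rw [convPow_one_eq, mul_comm]
    congr 1
    rw [← hsymm (w⁻¹ * x)]
    congr 1
    group

lemma convPow_le_one (hpos : ∀ x, 0 ≤ μ x) (hsum : HasSum μ 1)
    (hfin : (Function.support μ).Finite) : ∀ (n : ℕ) (x : G), cp n x ≤ 1 := by
  intro n
  induction n with
  | zero => intro x; simp only [convPow]; split <;> norm_num
  | succ n ih =>
    intro x
    rw [convPow_succ_eq_sum hfin]
    calc ∑ y ∈ hfin.toFinset, μ y * cp n (y⁻¹ * x)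
        ≤ ∑ y ∈ hfin.toFinset, μ y := by
          refine Finset.sum_le_sum fun y _ => ?_
          nlinarith [hpos y, ih (y⁻¹ * x), convPow_nonneg hpos n (y⁻¹ * x)]
      _ ≤ ∑' y, μ y := Summable.sum_le_tsum _ (fun i _ => hpos i) hsum.summable
      _ = 1 := hsum.tsum_eq

lemma convPow_mul_le (hpos : ∀ x, 0 ≤ μ x) (hfin : (Function.support μ).Finite)
    (m n : ℕ) (y x : G) : cp m y * cp n (y⁻¹ * x) ≤ cp (m + n) x := by
  rw [convPow_add hfin m n x]
  exact Summable.le_tsum (f := fun z : G => cp m z * cp n (z⁻¹ * x))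
    (convPow_summable_aux hfin m _) y
    (fun j _ => mul_nonneg (convPow_nonneg hpos m j) (convPow_nonneg hpos n _))

lemma convPow_sq_sum (hpos : ∀ x, 0 ≤ μ x) (hfin : (Function.support μ).Finite)
    (hsymm : ∀ x : G, μ x⁻¹ = μ x) (a : ℕ) :
    cp (a + a) 1 = ∑' y : G, cp a y ^ 2 := by
  rw [convPow_add hfin a a 1]
  refine tsum_congr fun y => ?_
  rw [mul_one, convPow_inv hfin hsymm, sq]

lemma convPow_cauchy (hpos : ∀ x, 0 ≤ μ x) (hfin : (Function.support μ).Finite)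
    (hsymm : ∀ x : G, μ x⁻¹ = μ x) (a b : ℕ) (x : G) :
    cp (a + b) x ^ 2 ≤ cp (a + a) 1 * cp (b + b) 1 := by
  have hsum_sq : ∀ (k : ℕ), Summable (fun z : G => cp k z ^ 2) := by
    intro k
    have := convPow_summable_aux hfin k (fun z => cp k z)
    simpa [sq] using this
  have h1 : cp (a + b) x = ∑ y ∈ hfin.toFinset ^ a, cp a y * cp b (y⁻¹ * x) := by
    rw [convPow_add hfin a b x]
    exact tsum_eq_sum fun z hz => by rw [convPow_support hfin a z hz, zero_mul]
  have hcs := Finset.sum_mul_sq_le_sq_mul_sq (hfin.toFinset ^ a)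
      (fun y => cp a y) (fun y => cp b (y⁻¹ * x))
  have h2 : (∑ y ∈ hfin.toFinset ^ a, cp a y ^ 2) = cp (a + a) 1 := by
    rw [convPow_sq_sum hpos hfin hsymm]
    exact (tsum_eq_sum fun z hz => by rw [convPow_support hfin a z hz]; ring).symm
  have h3 : (∑ y ∈ hfin.toFinset ^ a, cp b (y⁻¹ * x) ^ 2) ≤ cp (b + b) 1 := by
    rw [convPow_sq_sum hpos hfin hsymm]
    rw [show (∑ y ∈ hfin.toFinset ^ a, cp b (y⁻¹ * x) ^ 2)
        = ∑ z ∈ (hfin.toFinset ^ a).image (fun y => y⁻¹ * x), cp b z ^ 2 by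
      rw [Finset.sum_image]
      intro y _ y' _ h
      exact inv_injective (mul_right_cancel h)]
    exact Summable.sum_le_tsum _ (fun i _ => sq_nonneg _) (hsum_sq b)
  calc cp (a + b) x ^ 2
      ≤ (∑ y ∈ hfin.toFinset ^ a, cp a y ^ 2) * ∑ y ∈ hfin.toFinset ^ a, cp b (y⁻¹ * x) ^ 2 := by
        rw [h1]; exact hcs
    _ ≤ cp (a + a) 1 * cp (b + b) 1 := by
        rw [h2]
        refine mul_le_mul_of_nonneg_left h3 (convPow_nonneg hpos _ _)

end Core2

section Core3
variable {μ : G → ℝ} {r : ℝ}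
local notation "cp" => convPow μ

set_option maxHeartbeats 1000000 in
lemma green_le_two (hpos : ∀ x, 0 ≤ μ x) (hfin : (Function.support μ).Finite)
    (hsymm : ∀ x : G, μ x⁻¹ = μ x) (hr0 : 0 ≤ r)
    (hgs : ∀ x : G, Summable fun n : ℕ => r ^ n * cp n x) (x : G) :
    green μ r x ≤ 2 * green μ r 1 := by
  set E : ℕ → ℝ := fun m => r ^ (2 * m) * cp (2 * m) 1 with hE_def
  have hterm : ∀ (n : ℕ) (z : G), 0 ≤ r ^ n * cp n z :=
    fun n z => mul_nonneg (pow_nonneg hr0 n) (convPow_nonneg hpos n z)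
  have hinj2 : Function.Injective (fun m : ℕ => 2 * m) := fun a b h => by dsimp only at h; omega
  have hinj2' : Function.Injective (fun m : ℕ => 2 * m + 1) := fun a b h => by dsimp only at h; omega
  have hEsum : Summable E := (hgs 1).comp_injective hinj2
  have hEx : Summable (fun m => r ^ (2 * m) * cp (2 * m) x) := (hgs x).comp_injective hinj2
  have hOx : Summable (fun m => r ^ (2 * m + 1) * cp (2 * m + 1) x) := (hgs x).comp_injective hinj2'
  have hO1 : Summable (fun m => r ^ (2 * m + 1) * cp (2 * m + 1) 1) := (hgs 1).comp_injective hinj2'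
  have heo_x := tsum_even_add_odd (f := fun n : ℕ => r ^ n * cp n x) hEx hOx
  have heo_1 := tsum_even_add_odd (f := fun n : ℕ => r ^ n * cp n 1) hEsum hO1
  have cp_le : ∀ m : ℕ, cp (2 * m) x ≤ cp (2 * m) 1 := by
    intro m
    have hc := convPow_cauchy hpos hfin hsymm m m x
    rw [show m + m = 2 * m by ring] at hc
    nlinarith [convPow_nonneg hpos (2 * m) x, convPow_nonneg hpos (2 * m) 1]
  have evenle : ∀ m : ℕ, r ^ (2 * m) * cp (2 * m) x ≤ E m :=
    fun m => mul_le_mul_of_nonneg_left (cp_le m) (pow_nonneg hr0 _)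
  have oddle : ∀ m : ℕ, r ^ (2 * m + 1) * cp (2 * m + 1) x ≤ (E m + E (m + 1)) / 2 := by
    intro m
    have hc := convPow_cauchy hpos hfin hsymm m (m + 1) x
    rw [show m + (m + 1) = 2 * m + 1 by ring, show m + m = 2 * m by ring,
      show m + 1 + (m + 1) = 2 * (m + 1) by ring] at hc
    set w := r ^ (2 * m + 1) * cp (2 * m + 1) x with hw_def
    have hw0 : 0 ≤ w := hterm _ _
    have hwsq : w ^ 2 ≤ E m * E (m + 1) := by
      have hr2 : r ^ (2 * m + 1) * r ^ (2 * m + 1) = r ^ (2 * m) * r ^ (2 * (m + 1)) := by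
        rw [← pow_add, ← pow_add]; ring_nf
      have := mul_le_mul_of_nonneg_left hc
        (mul_nonneg (pow_nonneg hr0 (2 * m)) (pow_nonneg hr0 (2 * (m + 1))))
      calc w ^ 2 = (r ^ (2 * m) * r ^ (2 * (m + 1))) * cp (2 * m + 1) x ^ 2 := by
            rw [hw_def, ← hr2]; ring
        _ ≤ (r ^ (2 * m) * r ^ (2 * (m + 1))) * (cp (2 * m) 1 * cp (2 * (m + 1)) 1) := this
        _ = E m * E (m + 1) := by rw [hE_def]; ring
    have hE0 : 0 ≤ E m := hterm _ _
    have hE1 : 0 ≤ E (m + 1) := hterm _ _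
    nlinarith [sq_nonneg (E m - E (m + 1))]
  have hEshift : Summable (fun m => E (m + 1)) := (summable_nat_add_iff 1).2 hEsum
  have hhalf : Summable (fun m => (E m + E (m + 1)) / 2) := (hEsum.add hEshift).div_const 2
  have tsum_shift_le : (∑' m, E (m + 1)) ≤ ∑' m, E m := by
    rw [Summable.tsum_eq_zero_add hEsum]
    have : 0 ≤ E 0 := hterm _ _
    linarith
  have odd_le : (∑' m, r ^ (2 * m + 1) * cp (2 * m + 1) x) ≤ ∑' m, E m := by
    calc (∑' m, r ^ (2 * m + 1) * cp (2 * m + 1) x)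
        ≤ ∑' m, (E m + E (m + 1)) / 2 := Summable.tsum_le_tsum oddle hOx hhalf
      _ = ((∑' m, E m) + ∑' m, E (m + 1)) / 2 := by rw [tsum_div_const, Summable.tsum_add hEsum hEshift]
      _ ≤ ∑' m, E m := by linarith
  have even_le : (∑' m, r ^ (2 * m) * cp (2 * m) x) ≤ ∑' m, E m :=
    Summable.tsum_le_tsum evenle hEx hEsum
  have hE_le_green : (∑' m, E m) ≤ green μ r 1 := by
    have h0 : 0 ≤ ∑' m, r ^ (2 * m + 1) * cp (2 * m + 1) 1 := tsum_nonneg fun m => hterm _ _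
    have : (∑' m, E m) + ∑' m, r ^ (2 * m + 1) * cp (2 * m + 1) 1 = green μ r 1 := heo_1
    linarith
  have : green μ r x = (∑' m, r ^ (2 * m) * cp (2 * m) x)
      + ∑' m, r ^ (2 * m + 1) * cp (2 * m + 1) x := heo_x.symm
  linarith

end Core3

section WL
variable (S : Finset G)

lemma coe_UF : ((S ∪ S⁻¹ : Finset G) : Set G) = (S : Set G) ∪ (S : Set G)⁻¹ := by
  simp [Finset.coe_union, Finset.coe_inv]

lemma list_prod_mem_pow {U : Set G} : ∀ (l : List G), (∀ y ∈ l, y ∈ U) → l.prod ∈ U ^ l.length := by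
  intro l
  induction l with
  | nil => intro _; simp [Set.mem_one]
  | cons a l ih =>
    intro h
    rw [List.prod_cons, List.length_cons, pow_succ']
    exact Set.mul_mem_mul (h a (by simp)) (ih fun y hy => h y (List.mem_cons_of_mem a hy))

lemma exists_mem_pow (hS : Subgroup.closure (S : Set G) = ⊤) (x : G) :
    ∃ n : ℕ, x ∈ ((S : Set G) ∪ (S : Set G)⁻¹) ^ n := by
  have hx : x ∈ Submonoid.closure ((S : Set G) ∪ (S : Set G)⁻¹) := by
    rw [← Subgroup.closure_toSubmonoid]
    simp [hS]
  obtain ⟨l, hl, rfl⟩ := Submonoid.exists_list_of_mem_closure hx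
  exact ⟨l.length, list_prod_mem_pow l hl⟩

lemma mem_pow_wordLength (hS : Subgroup.closure (S : Set G) = ⊤) (x : G) :
    x ∈ ((S : Set G) ∪ (S : Set G)⁻¹) ^ wordLength S x :=
  Nat.sInf_mem (exists_mem_pow S hS x)

lemma pow_coe_eq (n : ℕ) :
    (((S ∪ S⁻¹ : Finset G) ^ n : Finset G) : Set G) = ((S : Set G) ∪ (S : Set G)⁻¹) ^ n := by
  rw [Finset.coe_pow, coe_UF]

lemma card_pow_le (n : ℕ) : ((S ∪ S⁻¹ : Finset G) ^ n).card ≤ (S ∪ S⁻¹ : Finset G).card ^ n := by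
  induction n with
  | zero => simp
  | succ n ih =>
    rw [pow_succ]
    calc ((S ∪ S⁻¹ : Finset G) ^ n * (S ∪ S⁻¹)).card
        ≤ ((S ∪ S⁻¹ : Finset G) ^ n).card * (S ∪ S⁻¹ : Finset G).card := Finset.card_mul_le
      _ ≤ (S ∪ S⁻¹ : Finset G).card ^ n * (S ∪ S⁻¹ : Finset G).card :=
          Nat.mul_le_mul_right _ ih
      _ = (S ∪ S⁻¹ : Finset G).card ^ (n + 1) := by rw [pow_succ]

/-- Sphere of radius `n` as a finset. -/
noncomputable def sphFin (n : ℕ) : Finset G :=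
  ((S ∪ S⁻¹ : Finset G) ^ n).filter (fun x => wordLength S x = n)

lemma mem_sphFin (hS : Subgroup.closure (S : Set G) = ⊤) {x : G} {n : ℕ} :
    x ∈ sphFin S n ↔ wordLength S x = n := by
  constructor
  · intro h; exact (Finset.mem_filter.mp h).2
  · intro h
    refine Finset.mem_filter.mpr ⟨?_, h⟩
    have := mem_pow_wordLength S hS x
    rw [h] at this
    rw [← Finset.mem_coe, pow_coe_eq]
    exact this

lemma sphFin_card (n : ℕ) : (sphFin S n).card ≤ (S ∪ S⁻¹ : Finset G).card ^ n :=
  le_trans (Finset.card_filter_le _ _) (card_pow_le S n)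

lemma sphFin_disjoint {n m : ℕ} (h : n ≠ m) : Disjoint (sphFin S n) (sphFin S m) := by
  rw [Finset.disjoint_left]
  intro x hx hx'
  exact h ((Finset.mem_filter.mp hx).2 ▸ (Finset.mem_filter.mp hx').2.symm ▸ rfl)

lemma S_nonempty [Infinite G] (hS : Subgroup.closure (S : Set G) = ⊤) :
    (S ∪ S⁻¹ : Finset G).Nonempty := by
  by_contra h
  rw [Finset.not_nonempty_iff_eq_empty] at h
  have hSe : S = ∅ := by
    rw [Finset.eq_empty_iff_forall_notMem]
    intro x hx
    have : x ∈ S ∪ S⁻¹ := Finset.mem_union_left _ hx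
    simp [h] at this
  rw [hSe] at hS
  simp only [Finset.coe_empty, Subgroup.closure_empty] at hS
  obtain ⟨x, hx⟩ := exists_ne (1 : G)
  have : x ∈ (⊥ : Subgroup G) := by rw [hS]; trivial
  exact hx (Subgroup.mem_bot.mp this)

end WL

section LB
variable {μ : G → ℝ} {r : ℝ}
lemma green_lower (S : Finset G) (hpos : ∀ x, 0 ≤ μ x) (hsum : HasSum μ 1)
    (hfin : (Function.support μ).Finite)
    (hadm : ∀ x : G, ∃ n : ℕ, 0 < convPow μ n x)
    (hne : (S ∪ S⁻¹ : Finset G).Nonempty) (hr1 : 1 ≤ r)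
    (hgs : ∀ x : G, Summable fun n : ℕ => r ^ n * convPow μ n x) :
    ∃ q : ℝ, 0 < q ∧ q ≤ 1 ∧ ∀ (n : ℕ), ∀ x ∈ ((S : Set G) ∪ (S : Set G)⁻¹) ^ n,
      q ^ n ≤ green μ r x := by
  classical
  choose nf hnf using hadm
  set IM := (S ∪ S⁻¹ : Finset G).image (fun u => convPow μ (nf u) u) with hIM
  have hIMne : IM.Nonempty := hne.image _
  set q := IM.min' hIMne with hq
  have hq_mem : q ∈ IM := IM.min'_mem hIMne
  obtain ⟨u0, hu0, hu0eq⟩ := Finset.mem_image.mp hq_mem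
  have hq_pos : 0 < q := hu0eq ▸ hnf u0
  have hq_le1 : q ≤ 1 := hu0eq ▸ convPow_le_one hpos hsum hfin _ _
  have hq_le : ∀ u ∈ (S ∪ S⁻¹ : Finset G), q ≤ convPow μ (nf u) u :=
    fun u hu => IM.min'_le _ (Finset.mem_image_of_mem _ hu)
  have key : ∀ (n : ℕ), ∀ x ∈ ((S : Set G) ∪ (S : Set G)⁻¹) ^ n,
      ∃ N : ℕ, q ^ n ≤ convPow μ N x := by
    intro n
    induction n with
    | zero =>
      intro x hx
      rw [pow_zero, Set.mem_one] at hx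
      exact ⟨0, by simp [hx, convPow]⟩
    | succ n ih =>
      intro x hx
      rw [pow_succ'] at hx
      obtain ⟨u, hu, y, hy, rfl⟩ := hx
      obtain ⟨N, hN⟩ := ih y hy
      refine ⟨nf u + N, ?_⟩
      have huF : u ∈ (S ∪ S⁻¹ : Finset G) := by
        rw [← Finset.mem_coe]
        simpa [Finset.coe_union, Finset.coe_inv] using hu
      have h1 : q * q ^ n ≤ convPow μ (nf u) u * convPow μ N y := by
        refine mul_le_mul (hq_le u huF) hN (pow_nonneg hq_pos.le n)
          (convPow_nonneg hpos _ _)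
      have h2 : convPow μ (nf u) u * convPow μ N (u⁻¹ * (u * y))
          ≤ convPow μ (nf u + N) (u * y) := convPow_mul_le hpos hfin _ _ _ _
      rw [inv_mul_cancel_left] at h2
      rw [pow_succ']
      exact le_trans h1 h2
  refine ⟨q, hq_pos, hq_le1, fun n x hx => ?_⟩
  obtain ⟨N, hN⟩ := key n x hx
  calc q ^ n ≤ convPow μ N x := hN
    _ ≤ r ^ N * convPow μ N x := by
        nlinarith [one_le_pow₀ hr1 (n := N), convPow_nonneg hpos N x]
    _ ≤ green μ r x := Summable.le_tsum (hgs x) N fun j _ =>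
        mul_nonneg (pow_nonneg (le_trans zero_le_one hr1) j) (convPow_nonneg hpos j x)

end LB

end GreenGrowth

namespace GreenGrowth

set_option maxHeartbeats 1000000 in
/-- If `ω_A(r) < ω_Γ(r)` for some `1 < r ≤ R`, then
`δ(A, 𝔡_r) < 1`; in fact `Σ_{x∈A} e^{−(1−ε)𝔡_r(e,x)} < ∞` for some `ε > 0`. -/
theorem subsetGrowthRate_lt_one_of_omega_gap {G : Type*} [Group G] [Infinite G]
    (S : Finset G) (hS : Subgroup.closure (S : Set G) = ⊤) (μ : G → ℝ)
    (hprob : IsProbMeasure μ) (hsymm : IsSymm μ) (hadm : IsAdmissible μ)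
    (hfin : (Function.support μ).Finite) (htrans : TransientAtSpectralRadius μ)
    (A : Set G) (r : ℝ) (hr1 : 1 < r) (hrR : r ≤ greenRadius μ)
    (hgap : omegaRestricted S μ A r < greenGrowthRate S μ r) :
    subsetGrowthRate A (fun x => drDist S μ r 1 x) < 1 ∧
      ∃ ε : ℝ, 0 < ε ∧
        Summable (fun x : A => Real.exp (-(1 - ε) * drDist S μ r 1 (x : G))) := by
  classical
  obtain ⟨hpos, hμsum⟩ := hprob
  have hr0 : (0:ℝ) < r := lt_trans one_pos hr1
  have hgs : ∀ x : G, Summable fun n : ℕ => r ^ n * convPow μ n x := htrans r hr0 hrR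
  have hterm : ∀ (n : ℕ) (x : G), 0 ≤ r ^ n * convPow μ n x :=
    fun n x => mul_nonneg (pow_nonneg hr0.le n) (convPow_nonneg hpos n x)
  have hgreen_nonneg : ∀ x : G, 0 ≤ green μ r x := fun x => tsum_nonneg (fun n => hterm n x)
  have hGe1 : (1:ℝ) ≤ green μ r 1 := by
    have h := Summable.le_tsum (hgs 1) 0 (fun j _ => hterm j 1)
    simpa [convPow, green] using h
  have hGe0 : (0:ℝ) < green μ r 1 := lt_of_lt_of_le one_pos hGe1
  obtain ⟨q, hq0, hq1, hqlow⟩ := green_lower S hpos hμsum hfin hadm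
    (S_nonempty S hS) hr1.le hgs
  have hglow : ∀ x : G, q ^ wordLength S x ≤ green μ r x :=
    fun x => hqlow _ x (mem_pow_wordLength S hS x)
  have hgpos : ∀ x : G, 0 < green μ r x :=
    fun x => lt_of_lt_of_le (pow_pos hq0 _) (hglow x)
  have hgup : ∀ x : G, green μ r x ≤ 2 * green μ r 1 :=
    green_le_two hpos hfin hsymm hr0.le hgs
  set ω := greenGrowthRate S μ r with hω_def
  set Ge := green μ r 1 with hGe_def
  set dfun : G → ℝ := fun x => drDist S μ r 1 x with hdfun_def
  have hdfun : ∀ x : G, dfun x = ω * (wordLength S x : ℝ)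
      + (- Real.log (green μ r x / Ge)) := by
    intro x
    simp only [hdfun_def, drDist, greenNorm, inv_one, one_mul, hGe_def, hω_def]
  -- the restricted sphere sums
  set T : ℕ → ℝ := fun n => ∑ x ∈ sphFin S n, (if x ∈ A then green μ r x else 0) with hT_def
  have hT_formula : ∀ n : ℕ,
      (∑' x : G, if x ∈ A ∧ wordLength S x = n then green μ r x else 0) = T n := by
    intro n
    rw [tsum_eq_sum (s := sphFin S n) (fun b hb => ?_)]
    · refine Finset.sum_congr rfl fun x hx => ?_
      have hw : wordLength S x = n := (mem_sphFin S hS).mp hx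
      by_cases hA : x ∈ A <;> simp [hA, hw]
    · have : wordLength S b ≠ n := fun h => hb ((mem_sphFin S hS).mpr h)
      simp [this]
  have hT_nonneg : ∀ n, 0 ≤ T n := by
    intro n
    refine Finset.sum_nonneg fun x _ => ?_
    by_cases hA : x ∈ A <;> simp [hA, hgreen_nonneg x]
  set B := ((S ∪ S⁻¹ : Finset G).card : ℝ) with hB_def
  have hB1 : (1:ℝ) ≤ B := by
    rw [hB_def]
    exact_mod_cast Finset.card_pos.mpr (S_nonempty S hS)
  have hT_le : ∀ n, T n ≤ B ^ n * (2 * Ge) := by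
    intro n
    calc T n ≤ ∑ _x ∈ sphFin S n, (2 * Ge) := by
          refine Finset.sum_le_sum fun x _ => ?_
          by_cases hA : x ∈ A
          · simpa [hA] using hgup x
          · simp [hA]; positivity
      _ = (sphFin S n).card * (2 * Ge) := by rw [Finset.sum_const, nsmul_eq_mul]
      _ ≤ B ^ n * (2 * Ge) := by
          have h1 : ((sphFin S n).card : ℝ) ≤ B ^ n := by
            rw [hB_def]
            exact_mod_cast sphFin_card S n
          nlinarith [hGe0]
  -- extraction of the eventual bound from the limsup gap
  set ωA := omegaRestricted S μ A r with hωA_def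
  have hωA_eq : ωA = limsup (fun n : ℕ => Real.log (T n) / n) atTop := by
    rw [hωA_def]
    unfold omegaRestricted
    congr 1
    funext n
    rw [hT_formula n]
  have hgap' : ωA < ω := hgap
  set a := (ωA + ω) / 2 with ha_def
  have haω : a < ω := by rw [ha_def]; linarith
  have hωAa : ωA < a := by rw [ha_def]; linarith
  have hMbound : ∃ M : ℝ, ∀ n : ℕ, Real.log (T n) / n ≤ M := by
    refine ⟨Real.log B + max 0 (Real.log (2 * Ge)), fun n => ?_⟩
    have hM0 : 0 ≤ Real.log B + max 0 (Real.log (2 * Ge)) := by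
      have := Real.log_nonneg hB1
      have := le_max_left 0 (Real.log (2 * Ge))
      linarith
    rcases Nat.eq_zero_or_pos n with h0 | hn
    · simp [h0, hM0]
    · have hn0 : (0:ℝ) < n := by exact_mod_cast hn
      rcases le_or_gt (T n) 1 with hc | hc
      · have : Real.log (T n) ≤ 0 := Real.log_nonpos (hT_nonneg n) hc
        exact le_trans (div_nonpos_of_nonpos_of_nonneg this hn0.le) hM0
      · have hlog : Real.log (T n) ≤ n * Real.log B + Real.log (2 * Ge) := by
          calc Real.log (T n) ≤ Real.log (B ^ n * (2 * Ge)) := by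
                refine Real.log_le_log (by linarith) (hT_le n)
            _ = n * Real.log B + Real.log (2 * Ge) := by
                rw [Real.log_mul (by positivity) (by positivity), Real.log_pow]
        rw [div_le_iff₀ hn0]
        calc Real.log (T n) ≤ n * Real.log B + Real.log (2 * Ge) := hlog
          _ ≤ n * Real.log B + n * max 0 (Real.log (2 * Ge)) := by
              have h1 : Real.log (2 * Ge) ≤ max 0 (Real.log (2 * Ge)) := le_max_right _ _
              have h2 : (1:ℝ) ≤ n := by exact_mod_cast hn
              nlinarith [le_max_left 0 (Real.log (2 * Ge))]
          _ = (Real.log B + max 0 (Real.log (2 * Ge))) * n := by ring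
  have h_ev : ∀ᶠ n : ℕ in atTop, Real.log (T n) / n < a := by
    refine eventually_lt_of_limsup_lt ?_ ?_
    · rw [← hωA_eq]; exact hωAa
    · obtain ⟨M, hM⟩ := hMbound
      exact isBoundedUnder_of ⟨M, hM⟩
  have h_evT : ∀ᶠ n : ℕ in atTop, T n ≤ Real.exp (a * n) := by
    filter_upwards [h_ev, eventually_ge_atTop 1] with n hn hn1
    have hn0 : (0:ℝ) < n := by exact_mod_cast hn1
    rcases le_or_gt (T n) 0 with hc | hc
    · exact le_trans hc (Real.exp_pos _).le
    · have : Real.log (T n) < a * n := by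
        rw [div_lt_iff₀ hn0] at hn; linarith [hn]
      calc T n = Real.exp (Real.log (T n)) := (Real.exp_log hc).symm
        _ ≤ Real.exp (a * n) := Real.exp_le_exp.mpr this.le
  obtain ⟨N, hN⟩ := eventually_atTop.mp h_evT
  -- choice of ε
  set L := |ω| + |Real.log q| + 1 with hL_def
  have hL0 : 0 < L := by rw [hL_def]; positivity
  set ε := min (1/2 : ℝ) ((ω - ωA) / (4 * L)) with hε_def
  have hε0 : 0 < ε := by
    rw [hε_def]
    refine lt_min (by norm_num) (div_pos (by linarith) (by positivity))
  have hε12 : ε ≤ 1/2 := min_le_left _ _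
  have hε1 : ε < 1 := lt_of_le_of_lt hε12 (by norm_num)
  have hεL : ε * L ≤ (ω - ωA) / 4 := by
    have h1 : ε ≤ (ω - ωA) / (4 * L) := min_le_right _ _
    have := mul_le_mul_of_nonneg_right h1 hL0.le
    calc ε * L ≤ (ω - ωA) / (4 * L) * L := this
      _ = (ω - ωA) / 4 := by field_simp
  set c := -(1 - ε) * ω - ε * Real.log q with hc_def
  have hca : c + a ≤ -(ω - ωA) / 4 := by
    have h1 : ω - Real.log q ≤ L := by
      rw [hL_def]
      have := le_abs_self ω
      have := neg_abs_le (Real.log q)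
      linarith
    have h2 : ε * (ω - Real.log q) ≤ ε * L := by nlinarith [hε0.le]
    have : c + a = -(ω - ωA)/2 + ε * (ω - Real.log q) := by
      rw [hc_def, ha_def]; ring
    linarith [le_trans h2 hεL]
  have hca0 : c + a < 0 := lt_of_le_of_lt hca (by linarith)
  set K := Real.exp (ε * Real.log Ge) / Ge with hK_def
  have hK0 : 0 < K := by rw [hK_def]; positivity
  -- pointwise bound
  have hpoint : ∀ x : G, Real.exp (-(1 - ε) * dfun x)
      ≤ K * Real.exp (c * (wordLength S x : ℝ)) * green μ r x := by
    intro x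
    set n : ℕ := wordLength S x with hn_def
    set t := green μ r x / Ge with ht_def
    have ht0 : 0 < t := div_pos (hgpos x) hGe0
    have hlogt : Real.log t = Real.log (green μ r x) - Real.log Ge :=
      Real.log_div (ne_of_gt (hgpos x)) (ne_of_gt hGe0)
    have hlogg : (n:ℝ) * Real.log q ≤ Real.log (green μ r x) := by
      have h := Real.log_le_log (pow_pos hq0 n) (hglow x)
      rwa [Real.log_pow] at h
    have expand : -(1 - ε) * dfun x
        = (-(1 - ε) * ω * n - ε * Real.log t) + Real.log t := by
      rw [hdfun x, ← hn_def, ← ht_def]; ring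
    rw [expand, Real.exp_add, Real.exp_log ht0]
    have hexp : Real.exp (-(1 - ε) * ω * n - ε * Real.log t)
        ≤ Real.exp (c * n + ε * Real.log Ge) := by
      apply Real.exp_le_exp.mpr
      have hlb : (n:ℝ) * Real.log q - Real.log Ge ≤ Real.log t := by
        rw [hlogt]; linarith
      have h2 : -(ε * Real.log t) ≤ -(ε * ((n:ℝ) * Real.log q - Real.log Ge)) := by
        nlinarith [hε0.le]
      rw [hc_def]
      nlinarith [h2]
    calc Real.exp (-(1 - ε) * ω * n - ε * Real.log t) * t
        ≤ Real.exp (c * n + ε * Real.log Ge) * t :=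
          mul_le_mul_of_nonneg_right hexp ht0.le
      _ = K * Real.exp (c * n) * green μ r x := by
          rw [Real.exp_add, hK_def, ht_def]
          ring
  -- dominating sequence
  set F : G → ℝ := fun x => if x ∈ A then Real.exp (-(1 - ε) * dfun x) else 0 with hF_def
  have hF0 : ∀ x, 0 ≤ F x := by
    intro x
    rw [hF_def]
    by_cases hA : x ∈ A <;> simp [hA, (Real.exp_pos _).le]
  set b : ℕ → ℝ := fun n => K * Real.exp (c * n) * T n with hb_def
  have hb0 : ∀ n, 0 ≤ b n := fun n => by
    rw [hb_def]
    exact mul_nonneg (mul_nonneg hK0.le (Real.exp_pos _).le) (hT_nonneg n)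
  have hFsph : ∀ n : ℕ, (∑ x ∈ sphFin S n, F x) ≤ b n := by
    intro n
    have hstep : ∀ x ∈ sphFin S n,
        F x ≤ K * Real.exp (c * n) * (if x ∈ A then green μ r x else 0) := by
      intro x hx
      have hw : wordLength S x = n := (mem_sphFin S hS).mp hx
      by_cases hA : x ∈ A
      · simp only [hF_def, hA, if_true]
        have := hpoint x
        rwa [hw] at this
      · simp [hF_def, hA]
    calc (∑ x ∈ sphFin S n, F x)
        ≤ ∑ x ∈ sphFin S n, K * Real.exp (c * n) * (if x ∈ A then green μ r x else 0) :=
          Finset.sum_le_sum hstep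
      _ = b n := by rw [hb_def, ← Finset.mul_sum]
  have hgeo : Summable (fun n : ℕ => K * Real.exp ((c + a) * n)) := by
    have h1 : Summable (fun n : ℕ => Real.exp (c + a) ^ n) :=
      summable_geometric_of_lt_one (Real.exp_pos _).le (Real.exp_lt_one_iff.mpr hca0)
    have h2 : (fun n : ℕ => Real.exp ((c + a) * n)) = fun n : ℕ => Real.exp (c + a) ^ n := by
      funext n
      rw [← Real.exp_nat_mul]
      ring_nf
    exact (h2 ▸ h1).mul_left K
  have hbsum : Summable b := by
    rw [← summable_nat_add_iff N]
    refine Summable.of_nonneg_of_le (fun n => hb0 _) (fun n => ?_)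
      ((summable_nat_add_iff N).2 hgeo)
    have hTn : T (n + N) ≤ Real.exp (a * ((n + N : ℕ) : ℝ)) := hN (n + N) (by omega)
    rw [hb_def]
    calc K * Real.exp (c * ((n + N : ℕ) : ℝ)) * T (n + N)
        ≤ K * Real.exp (c * ((n + N : ℕ) : ℝ)) * Real.exp (a * ((n + N : ℕ) : ℝ)) :=
          mul_le_mul_of_nonneg_left hTn (mul_nonneg hK0.le (Real.exp_pos _).le)
      _ = K * Real.exp ((c + a) * ((n + N : ℕ) : ℝ)) := by
          rw [mul_assoc, ← Real.exp_add]
          congr 1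
          ring
  set Tot := ∑' n, b n with hTot_def
  have hTot0 : 0 ≤ Tot := tsum_nonneg hb0
  -- partial sums over A are bounded by Tot
  have hpartial : ∀ u : Finset A, (∑ x ∈ u, Real.exp (-(1 - ε) * dfun ↑x)) ≤ Tot := by
    intro u
    set u' := u.image (Subtype.val) with hu'_def
    have h1 : (∑ x ∈ u, Real.exp (-(1 - ε) * dfun ↑x)) = ∑ g ∈ u', F g := by
      rw [hu'_def, Finset.sum_image (fun x _ y _ h => Subtype.coe_injective h)]
      refine Finset.sum_congr rfl fun x _ => ?_
      rw [hF_def]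
      simp [x.2]
    set M := u'.sup (wordLength S) with hM_def
    have hsub : u' ⊆ (Finset.range (M + 1)).biUnion (sphFin S) := by
      intro g hg
      refine Finset.mem_biUnion.mpr ⟨wordLength S g, ?_, (mem_sphFin S hS).mpr rfl⟩
      exact Finset.mem_range.mpr (Nat.lt_succ_of_le (Finset.le_sup hg))
    have h2 : (∑ g ∈ u', F g) ≤ ∑ g ∈ (Finset.range (M + 1)).biUnion (sphFin S), F g :=
      Finset.sum_le_sum_of_subset_of_nonneg hsub (fun g _ _ => hF0 g)
    have h3 : (∑ g ∈ (Finset.range (M + 1)).biUnion (sphFin S), F g)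
        = ∑ n ∈ Finset.range (M + 1), ∑ g ∈ sphFin S n, F g := by
      refine Finset.sum_biUnion ?_
      intro i _ j _ hij
      exact sphFin_disjoint S hij
    have h4 : (∑ n ∈ Finset.range (M + 1), ∑ g ∈ sphFin S n, F g)
        ≤ ∑ n ∈ Finset.range (M + 1), b n :=
      Finset.sum_le_sum fun n _ => hFsph n
    have h5 : (∑ n ∈ Finset.range (M + 1), b n) ≤ Tot :=
      Summable.sum_le_tsum _ (fun n _ => hb0 n) hbsum
    rw [h1]
    calc (∑ g ∈ u', F g) ≤ _ := h2
      _ = _ := h3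
      _ ≤ _ := h4
      _ ≤ Tot := h5
  have hFA : Summable (fun x : A => Real.exp (-(1 - ε) * dfun ↑x)) :=
    summable_of_sum_le (fun x => (Real.exp_pos _).le) hpartial
  have hFA_tsum : (∑' x : A, Real.exp (-(1 - ε) * dfun ↑x)) ≤ Tot :=
    Summable.tsum_le_of_sum_le hFA hpartial
  -- counting bound
  set C' := Tot + 1 with hC'_def
  have hC'1 : (1:ℝ) ≤ C' := by rw [hC'_def]; linarith
  have hC'0 : (0:ℝ) < C' := lt_of_lt_of_le one_pos hC'1
  have hcard : ∀ m : ℕ, (Nat.card {x : G // x ∈ A ∧ dfun x ≤ (m:ℝ)} : ℝ)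
      ≤ C' * Real.exp ((1 - ε) * m) := by
    intro m
    by_cases hfin' : Finite {x : G // x ∈ A ∧ dfun x ≤ (m:ℝ)}
    · haveI := hfin'
      haveI := Fintype.ofFinite {x : G // x ∈ A ∧ dfun x ≤ (m:ℝ)}
      set D := {x : G // x ∈ A ∧ dfun x ≤ (m:ℝ)}
      set i : D → A := fun x => ⟨x.1, x.2.1⟩ with hi_def
      have hi_inj : Function.Injective i := by
        intro x y h
        have h2 : (i x).1 = (i y).1 := congrArg Subtype.val h
        exact Subtype.ext h2
      set s : Finset A := Finset.univ.image i with hs_def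
      have hs_card : s.card = Nat.card D := by
        rw [hs_def, Finset.card_image_of_injective _ hi_inj, Finset.card_univ,
          Nat.card_eq_fintype_card]
      have hmem : ∀ y ∈ s, Real.exp (-(1 - ε) * (m:ℝ)) ≤ Real.exp (-(1 - ε) * dfun ↑y) := by
        intro y hy
        obtain ⟨x, _, rfl⟩ := Finset.mem_image.mp hy
        apply Real.exp_le_exp.mpr
        have hd : dfun ↑(i x) ≤ (m:ℝ) := x.2.2
        nlinarith [hd, hε12]
      have hlow : (s.card : ℝ) * Real.exp (-(1 - ε) * (m:ℝ))
          ≤ ∑ y ∈ s, Real.exp (-(1 - ε) * dfun ↑y) := by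
        have := Finset.card_nsmul_le_sum s _ _ hmem
        simpa [nsmul_eq_mul] using this
      have hup : (∑ y ∈ s, Real.exp (-(1 - ε) * dfun ↑y)) ≤ Tot :=
        le_trans (Summable.sum_le_tsum s (fun x _ => (Real.exp_pos _).le) hFA) hFA_tsum
      have hineq : (Nat.card D : ℝ) * Real.exp (-(1 - ε) * (m:ℝ)) ≤ C' := by
        rw [← hs_card]
        calc (s.card : ℝ) * Real.exp (-(1 - ε) * (m:ℝ)) ≤ Tot := le_trans hlow hup
          _ ≤ C' := by rw [hC'_def]; linarith
      have hexp0 : (0:ℝ) < Real.exp (-(1 - ε) * (m:ℝ)) := Real.exp_pos _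
      rw [← le_div_iff₀ hexp0] at hineq
      calc (Nat.card D : ℝ) ≤ C' / Real.exp (-(1 - ε) * (m:ℝ)) := hineq
        _ = C' * Real.exp ((1 - ε) * m) := by
            rw [div_eq_mul_inv, ← Real.exp_neg]
            ring_nf
    · have : Infinite {x : G // x ∈ A ∧ dfun x ≤ (m:ℝ)} := not_finite_iff_infinite.mp hfin'
      rw [Nat.card_eq_zero_of_infinite]
      push_cast
      positivity
  -- limsup of counting function
  have hδ : subsetGrowthRate A dfun ≤ 1 - ε / 2 := by
    obtain ⟨m₁, hm₁⟩ := exists_nat_gt (2 * Real.log C' / ε)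
    have hev : ∀ᶠ m : ℕ in atTop,
        Real.log (Nat.card {x : G // x ∈ A ∧ dfun x ≤ (m:ℝ)}) / m ≤ 1 - ε / 2 := by
      filter_upwards [eventually_ge_atTop (max m₁ 1)] with m hm
      have hm1 : 1 ≤ m := le_trans (le_max_right _ _) hm
      have hmm₁ : m₁ ≤ m := le_trans (le_max_left _ _) hm
      have hm0 : (0:ℝ) < m := by exact_mod_cast hm1
      have hlogC' : 0 ≤ Real.log C' := Real.log_nonneg hC'1
      have hlogC'm : Real.log C' ≤ ε * m / 2 := by
        have h1 : 2 * Real.log C' / ε < m₁ := hm₁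
        have h2 : (m₁:ℝ) ≤ m := by exact_mod_cast hmm₁
        rw [div_lt_iff₀ hε0] at h1
        nlinarith
      set k := Nat.card {x : G // x ∈ A ∧ dfun x ≤ (m:ℝ)} with hk_def
      have hlogk : Real.log k ≤ Real.log C' + (1 - ε) * m := by
        rcases Nat.eq_zero_or_pos k with h0 | hpos'
        · rw [h0]
          push_cast
          rw [Real.log_zero]
          have : 0 ≤ (1 - ε) * m := by nlinarith [hε1.le]
          linarith
        · have hk1 : (1:ℝ) ≤ k := by exact_mod_cast hpos'
          calc Real.log k ≤ Real.log (C' * Real.exp ((1 - ε) * m)) :=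
                Real.log_le_log (by linarith) (hcard m)
            _ = Real.log C' + (1 - ε) * m := by
                rw [Real.log_mul (ne_of_gt hC'0) (Real.exp_ne_zero _), Real.log_exp]
      rw [div_le_iff₀ hm0]
      calc Real.log k ≤ Real.log C' + (1 - ε) * m := hlogk
        _ ≤ ε * m / 2 + (1 - ε) * m := by linarith
        _ = (1 - ε / 2) * m := by ring
    refine limsup_le_of_le ?_ hev
    refine isCoboundedUnder_le_of_le atTop (x := 0) fun m => ?_
    rcases Nat.eq_zero_or_pos (Nat.card {x : G // x ∈ A ∧ dfun x ≤ (m:ℝ)}) with h0 | hpos'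
    · simp [h0]
    · have h1 : (1:ℝ) ≤ (Nat.card {x : G // x ∈ A ∧ dfun x ≤ (m:ℝ)} : ℝ) := by
        exact_mod_cast hpos'
      positivity
  constructor
  · exact lt_of_le_of_lt hδ (by linarith)
  · exact ⟨ε, hε0, hFA⟩


end GreenGrowth
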